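/- arXiv:1911.05110 — 3 statements merged into one kernel-verified Lean document; each statement's English description precedes it below -/
import Mathlib

section
/- Let d ≥ 2, let f : ℝ^{d−1} → ℝ be measurable, and let Σ = { (x̄, x_d) ∈ ℝ^{d−1} × ℝ : x_d ≤ f(x̄) }. Then for every t > 0 and every (x̄, x_d) ∈ ℝ^{d−1} × ℝ, (G_t * 1_Σ)(x̄, x_d) = 1/2 + (1/2) ∫_{ℝ^{d−1}} G_t^{(d−1)}(x̄ − ȳ) · erf( (f(ȳ) − x_d) / (2√t) ) dȳ, where G_t^{(d−1)} denotes the Gaussian kernel on ℝ^{d−1}. -/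
/-!
The kernel on `ℝ^{d-1} × ℝ` factors as `G_t^{(d-1)}(x̄) · G_t^{(1)}(x_d)`. By Fubini, integrating
`1_Σ` first in the vertical variable leaves, over each `ȳ`, the one-dimensional Gaussian mass of
the half-line `(-∞, f(ȳ)]` seen from `x_d`; after rescaling by `2√t` this is
`1/2 + erf((f(ȳ) - x_d) / (2√t)) / 2`. Integrating against `G_t^{(d-1)}`, whose total mass is `1`,
gives the formula.
-/

open MeasureTheory

/-- The Gaussian kernel on `ℝ^n` at time `t`. -/
noncomputable def gaussKer (n : ℕ) (t : ℝ) (x : EuclideanSpace ℝ (Fin n)) : ℝ :=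
  (4 * Real.pi * t) ^ (-(n : ℝ) / 2) * Real.exp (-‖x‖ ^ 2 / (4 * t))

/-- The Gaussian kernel at time `t` on `ℝ^d = ℝ^{d−1} × ℝ`, written in split coordinates
`(x̄, x_d)`; here `n = d − 1` so the dimension is `n + 1`. -/
noncomputable def gaussKerSplit (n : ℕ) (t : ℝ) (p : EuclideanSpace ℝ (Fin n) × ℝ) : ℝ :=
  (4 * Real.pi * t) ^ (-((n : ℝ) + 1) / 2) * Real.exp (-(‖p.1‖ ^ 2 + p.2 ^ 2) / (4 * t))

/-- Convolution of the Gaussian kernel on `ℝ^{d−1} × ℝ` with a function. -/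
noncomputable def gaussConvSplit (n : ℕ) (t : ℝ) (u : EuclideanSpace ℝ (Fin n) × ℝ → ℝ)
    (p : EuclideanSpace ℝ (Fin n) × ℝ) : ℝ :=
  ∫ q : EuclideanSpace ℝ (Fin n) × ℝ, gaussKerSplit n t (p.1 - q.1, p.2 - q.2) * u q

/-- The error function `erf(s) = (2/√π) ∫₀ˢ exp(−r²) dr`. -/
noncomputable def erf (s : ℝ) : ℝ :=
  (2 / Real.sqrt Real.pi) * ∫ r in (0 : ℝ)..s, Real.exp (-r ^ 2)

open Real Set

theorem continuous_erf : Continuous erf :=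
  continuous_const.mul <| intervalIntegral.continuous_primitive
    (fun _ _ => (continuous_exp.comp (continuous_pow 2).neg).intervalIntegrable _ _) 0

theorem erf_neg (s : ℝ) : erf (-s) = -erf s := by
  have h := intervalIntegral.integral_comp_neg (a := s) (b := 0) fun r : ℝ => exp (-r ^ 2)
  simp only [neg_zero, even_two, Even.neg_pow] at h
  rw [erf, erf, ← h, intervalIntegral.integral_symm]
  ring

theorem integrable_exp_neg_sq : Integrable fun r : ℝ => exp (-r ^ 2) := by
  simpa using integrable_exp_neg_mul_sq one_pos

theorem integral_Ioi_exp_neg_sq (a : ℝ) :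
    ∫ r in Ioi a, exp (-r ^ 2) = √π / 2 * (1 - erf a) := by
  have hhalf : ∫ r in Ioi (0 : ℝ), exp (-r ^ 2) = √π / 2 := by
    simpa using integral_gaussian_Ioi 1
  have hsplit := intervalIntegral.integral_Ioi_sub_Ioi' (a := 0) (b := a)
    integrable_exp_neg_sq.integrableOn integrable_exp_neg_sq.integrableOn
  rw [hhalf] at hsplit
  rw [erf]
  field_simp
  linarith

theorem abs_erf_le_one (s : ℝ) : |erf s| ≤ 1 := by
  have htot : ∫ r, exp (-r ^ 2) = √π := by simpa using integral_gaussian 1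
  have hnonneg : 0 ≤ ∫ r in Ioi s, exp (-r ^ 2) :=
    setIntegral_nonneg measurableSet_Ioi fun r _ => (exp_pos _).le
  have hle : ∫ r in Ioi s, exp (-r ^ 2) ≤ √π :=
    htot ▸ setIntegral_le_integral integrable_exp_neg_sq (ae_of_all _ fun r => (exp_pos _).le)
  have hpi : 0 < √π := sqrt_pos.mpr pi_pos
  rw [integral_Ioi_exp_neg_sq] at hnonneg hle
  rw [abs_le]
  constructor <;> nlinarith

theorem setIntegral_Iic_comp_sub_left {E : Type*} [NormedAddCommGroup E] [NormedSpace ℝ E]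
    (g : ℝ → E) (x c : ℝ) :
    ∫ s in Iic c, g (x - s) = ∫ u in Ioi (x - c), g u := by
  have hpre : (fun s => x - s) ⁻¹' Ici (x - c) = Iic c := by
    ext s
    simp only [mem_preimage, mem_Ici, mem_Iic]
    constructor <;> intro h <;> linarith
  rw [← integral_Ici_eq_integral_Ioi, ← hpre,
    (Measure.measurePreserving_sub_left volume x).setIntegral_preimage_emb
      (Homeomorph.subLeft x).isClosedEmbedding.measurableEmbedding]

/-- The Gaussian kernel on `ℝ` itself, rather than on `EuclideanSpace ℝ (Fin 1)`. -/
noncomputable def gaussKerReal (t s : ℝ) : ℝ :=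
  (4 * π * t) ^ (-(1 : ℝ) / 2) * exp (-s ^ 2 / (4 * t))

section Kernels

variable {t : ℝ}

theorem integrable_gaussKerReal (ht : 0 < t) : Integrable (gaussKerReal t) := by
  refine ((integrable_exp_neg_mul_sq (b := 1 / (4 * t)) (by positivity)).const_mul
    ((4 * π * t) ^ (-(1 : ℝ) / 2))).congr (ae_of_all _ fun s => ?_)
  simp only [gaussKerReal]
  ring_nf

theorem integral_Ioi_gaussKerReal (ht : 0 < t) (a : ℝ) :
    ∫ u in Ioi a, gaussKerReal t u = (1 - erf (a / (2 * √t))) / 2 := by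
  have hst : 0 < √t := sqrt_pos.mpr ht
  have hscale : ∀ u, gaussKerReal t u =
      (4 * π * t) ^ (-(1 : ℝ) / 2) * exp (-(u * (2 * √t)⁻¹) ^ 2) := by
    intro u
    rw [gaussKerReal, mul_pow, inv_pow, mul_pow, sq_sqrt ht.le]
    ring_nf
  have hconst : (4 * π * t) ^ (-(1 : ℝ) / 2) * (2 * √t) * √π = 1 := by
    rw [neg_div, rpow_neg (by positivity), ← sqrt_eq_rpow, sqrt_mul (by positivity),
      sqrt_mul (by norm_num), show √(4 : ℝ) = 2 by
        rw [show (4 : ℝ) = 2 ^ 2 by norm_num, sqrt_sq (by norm_num)]]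
    field_simp
  simp_rw [hscale]
  rw [integral_const_mul, integral_comp_mul_right_Ioi (fun r => exp (-r ^ 2)) a
    (inv_pos.mpr (by positivity)), integral_Ioi_exp_neg_sq, inv_inv, smul_eq_mul, div_eq_mul_inv a]
  linear_combination (1 - erf (a * (2 * √t)⁻¹)) / 2 * hconst

theorem integral_Iic_gaussKerReal_sub (ht : 0 < t) (x c : ℝ) :
    ∫ s in Iic c, gaussKerReal t (x - s) = 1 / 2 + 1 / 2 * erf ((c - x) / (2 * √t)) := by
  rw [setIntegral_Iic_comp_sub_left, integral_Ioi_gaussKerReal ht, ← neg_sub c x, neg_div,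
    erf_neg]
  ring

variable {n : ℕ}

theorem integral_gaussKer (ht : 0 < t) : ∫ x, gaussKer n t x = 1 := by
  have h4 : 0 < 4 * π * t := by positivity
  have hgauss := GaussianFourier.integral_rexp_neg_mul_sq_norm
    (V := EuclideanSpace ℝ (Fin n)) (b := 1 / (4 * t)) (by positivity)
  rw [finrank_euclideanSpace_fin, show π / (1 / (4 * t)) = 4 * π * t by field_simp] at hgauss
  have hexp : ∀ x : EuclideanSpace ℝ (Fin n),
      exp (-‖x‖ ^ 2 / (4 * t)) = exp (-(1 / (4 * t)) * ‖x‖ ^ 2) := fun x => by ring_nf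
  simp only [gaussKer, hexp]
  rw [integral_const_mul, hgauss, ← rpow_add h4, neg_div, neg_add_cancel, rpow_zero]

theorem integrable_gaussKer (ht : 0 < t) : Integrable (gaussKer n t) :=
  .of_integral_ne_zero (by rw [integral_gaussKer ht]; exact one_ne_zero)

theorem gaussKerSplit_eq_mul (ht : 0 < t) (y : EuclideanSpace ℝ (Fin n)) (s : ℝ) :
    gaussKerSplit n t (y, s) = gaussKer n t y * gaussKerReal t s := by
  rw [gaussKerSplit, gaussKer, gaussKerReal,
    show -((n : ℝ) + 1) / 2 = -(n : ℝ) / 2 + -1 / 2 by ring, rpow_add (by positivity),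
    mul_mul_mul_comm, ← exp_add]
  congr 2
  ring

theorem integrable_gaussKerSplit_sub (ht : 0 < t) (p : EuclideanSpace ℝ (Fin n) × ℝ) :
    Integrable (fun q => gaussKerSplit n t (p.1 - q.1, p.2 - q.2)) (volume.prod volume) :=
  (((integrable_gaussKer ht).comp_sub_left p.1).mul_prod
    ((integrable_gaussKerReal ht).comp_sub_left p.2)).congr
    (ae_of_all _ fun _ => (gaussKerSplit_eq_mul ht _ _).symm)

end Kernels

theorem integral_indicator_subgraph {X E : Type*} [MeasurableSpace X] [NormedAddCommGroup E]
    [NormedSpace ℝ E] {μ : Measure X} [SFinite μ] {ν : Measure ℝ} [SFinite ν] {f : X → ℝ}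
    (hf : Measurable f) {F : X × ℝ → E} (hF : Integrable F (μ.prod ν)) :
    ∫ q, {q : X × ℝ | q.2 ≤ f q.1}.indicator F q ∂μ.prod ν =
      ∫ x, ∫ s in Iic (f x), F (x, s) ∂ν ∂μ := by
  have hS : MeasurableSet {q : X × ℝ | q.2 ≤ f q.1} :=
    measurableSet_le measurable_snd (hf.comp measurable_fst)
  rw [integral_prod _ (hF.indicator hS)]
  refine integral_congr_ae (ae_of_all _ fun x => ?_)
  dsimp only
  rw [← integral_indicator measurableSet_Iic]
  rfl

theorem gauss_conv_subgraph_general (n : ℕ)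
    (f : EuclideanSpace ℝ (Fin n) → ℝ) (hf : Measurable f)
    (S : Set (EuclideanSpace ℝ (Fin n) × ℝ))
    (hS : S = {p : EuclideanSpace ℝ (Fin n) × ℝ | p.2 ≤ f p.1}) :
    ∀ t : ℝ, 0 < t → ∀ p : EuclideanSpace ℝ (Fin n) × ℝ,
      gaussConvSplit n t (Set.indicator S 1) p =
        1 / 2 + (1 / 2) * ∫ y : EuclideanSpace ℝ (Fin n),
          gaussKer n t (p.1 - y) * erf ((f y - p.2) / (2 * Real.sqrt t)) := by
  intro t ht p
  set g : EuclideanSpace ℝ (Fin n) → ℝ := fun y => erf ((f y - p.2) / (2 * √t))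
  have hKg : Integrable fun y => gaussKer n t (p.1 - y) * g y :=
    ((integrable_gaussKer ht).comp_sub_left p.1).mul_bdd
      (continuous_erf.measurable.comp ((hf.sub_const _).div_const _)).aestronglyMeasurable
      (ae_of_all _ fun _ => abs_erf_le_one _)
  have hinner : ∀ y, ∫ s in Iic (f y), gaussKerSplit n t (p.1 - y, p.2 - s) =
      1 / 2 * gaussKer n t (p.1 - y) + 1 / 2 * (gaussKer n t (p.1 - y) * g y) := fun y => by
    simp only [gaussKerSplit_eq_mul ht, integral_const_mul, integral_Iic_gaussKerReal_sub ht, g]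
    ring
  calc gaussConvSplit n t (S.indicator 1) p
      = ∫ q, S.indicator (fun q => gaussKerSplit n t (p.1 - q.1, p.2 - q.2)) q := by
        refine integral_congr_ae (ae_of_all _ fun q => ?_)
        by_cases hq : q ∈ S <;> simp [hq]
    _ = ∫ y, (1 / 2 * gaussKer n t (p.1 - y) + 1 / 2 * (gaussKer n t (p.1 - y) * g y)) := by
        rw [hS, Measure.volume_eq_prod, integral_indicator_subgraph hf
          (integrable_gaussKerSplit_sub ht p)]
        simp only [hinner]
    _ = 1 / 2 + 1 / 2 * ∫ y, gaussKer n t (p.1 - y) * g y := by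
        rw [integral_add (((integrable_gaussKer ht).comp_sub_left p.1).const_mul _)
          (hKg.const_mul _), integral_const_mul, integral_const_mul,
          integral_sub_left_eq_self (gaussKer n t), integral_gaussKer ht, mul_one]

/-- Gaussian convolution of the indicator of a subgraph `Σ = {x_d ≤ f(x̄)}` in
`ℝ^d = ℝ^{d−1} × ℝ` (with `n = d − 1 ≥ 1`):
`(G_t * 1_Σ)(x̄, x_d) = 1/2 + (1/2) ∫ G_t^{(d−1)}(x̄ − ȳ) erf((f(ȳ) − x_d)/(2√t)) dȳ`. -/
theorem gauss_conv_subgraph (n : ℕ) (hn : 1 ≤ n)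
    (f : EuclideanSpace ℝ (Fin n) → ℝ) (hf : Measurable f)
    (S : Set (EuclideanSpace ℝ (Fin n) × ℝ))
    (hS : S = {p : EuclideanSpace ℝ (Fin n) × ℝ | p.2 ≤ f p.1}) :
    ∀ t : ℝ, 0 < t → ∀ p : EuclideanSpace ℝ (Fin n) × ℝ,
      gaussConvSplit n t (Set.indicator S 1) p =
        1 / 2 + (1 / 2) * ∫ y : EuclideanSpace ℝ (Fin n),
          gaussKer n t (p.1 - y) * erf ((f y - p.2) / (2 * Real.sqrt t)) :=
  gauss_conv_subgraph_general n f hf S hS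
end

section
/- Let V be a real inner product space with norm ‖·‖, let E : V → ℝ, let k > 0, let M ≥ 1, and let γ_{m,i} (1 ≤ m ≤ M, 0 ≤ i ≤ m−1) be real numbers. Let U_0, U_1, …, U_M ∈ V be such that for each m = 1, …, M, U_m minimizes u ↦ E(u) + Σ_{i=0}^{m−1} (γ_{m,i}/(2k)) ‖u − U_i‖² over V. Define γ̃_{M,i} = γ_{M,i} for 0 ≤ i ≤ M−1 and, recursively downward for m = M−1, …, 1, γ̃_{m,i} = γ_{m,i} − Σ_{j=m+1}^{M} γ̃_{j,i} · S̃_{j,m}/S̃_{j,j} for 0 ≤ i ≤ m−1, where S̃_{j,m} = Σ_{i=0}^{m−1} γ̃_{j,i}. If S̃_{m,m} > 0 for every m = 1, …, M, then E(U_M) ≤ E(U_0). -/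
open RealInnerProductSpace

lemma normsq_sub_normsq' {V : Type*} [NormedAddCommGroup V] [InnerProductSpace ℝ V]
    (x y : V) : ‖x‖^2 - ‖y‖^2 = ⟪x - y, x + y⟫ := by
  rw [inner_sub_left, inner_add_right, inner_add_right,
    real_inner_self_eq_norm_sq, real_inner_self_eq_norm_sq, real_inner_comm]
  ring

/-- Telescoping Cholesky-type identity. -/
lemma keyB' {V : Type*} [NormedAddCommGroup V] [InnerProductSpace ℝ V]
    (c : ℕ → ℝ) (U : ℕ → V) (n : ℕ) :
    ∑ p ∈ Finset.range n, (∑ i ∈ Finset.range (p+1), c i) *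
      (∑ i ∈ Finset.range (p+1), c i * (‖U (p+1) - U i‖^2 - ‖U p - U i‖^2))
    = ‖∑ i ∈ Finset.range n, c i • (U n - U i)‖^2 := by
  induction n with
  | zero => simp
  | succ n ih =>
    rw [Finset.sum_range_succ, ih]
    set Wn := ∑ i ∈ Finset.range (n+1), c i • (U (n+1) - U i) with hWn
    set W' := ∑ i ∈ Finset.range (n+1), c i • (U n - U i) with hW'
    have hW'n : W' = ∑ i ∈ Finset.range n, c i • (U n - U i) := by
      rw [hW', Finset.sum_range_succ]; simp
    have hdiff : Wn - W' = (∑ i ∈ Finset.range (n+1), c i) • (U (n+1) - U n) := by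
      rw [hWn, hW', ← Finset.sum_sub_distrib, Finset.sum_smul]
      refine Finset.sum_congr rfl fun i _ => ?_
      rw [← smul_sub]
      congr 1
      abel
    have hT : (∑ i ∈ Finset.range (n+1), c i * (‖U (n+1) - U i‖^2 - ‖U n - U i‖^2))
        = ⟪U (n+1) - U n, Wn + W'⟫ := by
      rw [hWn, hW', ← Finset.sum_add_distrib, inner_sum]
      refine Finset.sum_congr rfl fun i _ => ?_
      have hd : (U (n+1) - U i) - (U n - U i) = U (n+1) - U n := by abel
      calc c i * (‖U (n+1) - U i‖^2 - ‖U n - U i‖^2)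
          = c i * ⟪U (n+1) - U n, (U (n+1) - U i) + (U n - U i)⟫ := by
            rw [normsq_sub_normsq', hd]
        _ = ⟪U (n+1) - U n, c i • ((U (n+1) - U i) + (U n - U i))⟫ :=
            (real_inner_smul_right _ _ _).symm
        _ = ⟪U (n+1) - U n, c i • (U (n+1) - U i) + c i • (U n - U i)⟫ := by
            rw [smul_add]
    have key : (∑ i ∈ Finset.range (n+1), c i) *
        (∑ i ∈ Finset.range (n+1), c i * (‖U (n+1) - U i‖^2 - ‖U n - U i‖^2))
        = ‖Wn‖^2 - ‖W'‖^2 := by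
      rw [hT, ← real_inner_smul_left, ← hdiff, ← normsq_sub_normsq']
    rw [← hW'n]
    linarith [key]

/-- The dissipation term is nonnegative under the Cholesky-type positivity condition. -/
lemma Dnonneg {V : Type*} [NormedAddCommGroup V] [InnerProductSpace ℝ V]
    (M : ℕ) (γ γt St : ℕ → ℕ → ℝ) (U : ℕ → V)
    (hsub : ∀ p < M, ∀ i ≤ p,
      γ (p+1) i = ∑ j ∈ Finset.Icc (p+1) M, γt j i * St j (p+1) / St j j)
    (hSt : ∀ j m : ℕ, St j m = ∑ i ∈ Finset.range m, γt j i)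
    (hpos : ∀ m, 1 ≤ m → m ≤ M → 0 < St m m) :
    0 ≤ ∑ p ∈ Finset.range M, ∑ i ∈ Finset.range (p+1),
      γ (p+1) i * (‖U (p+1) - U i‖^2 - ‖U p - U i‖^2) := by
  have hcalc : ∑ p ∈ Finset.range M, ∑ i ∈ Finset.range (p+1),
        γ (p+1) i * (‖U (p+1) - U i‖^2 - ‖U p - U i‖^2)
      = ∑ j ∈ Finset.Icc 1 M, (St j j)⁻¹ *
        ‖∑ i ∈ Finset.range j, γt j i • (U j - U i)‖^2 := by
    calc ∑ p ∈ Finset.range M, ∑ i ∈ Finset.range (p+1),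
            γ (p+1) i * (‖U (p+1) - U i‖^2 - ‖U p - U i‖^2)
        = ∑ p ∈ Finset.range M, ∑ j ∈ Finset.Icc (p+1) M, ∑ i ∈ Finset.range (p+1),
            (γt j i * St j (p+1) / St j j) *
              (‖U (p+1) - U i‖^2 - ‖U p - U i‖^2) := by
          refine Finset.sum_congr rfl fun p hp => ?_
          rw [← Finset.sum_comm]
          refine Finset.sum_congr rfl fun i hi => ?_
          rw [hsub p (Finset.mem_range.mp hp) i (by
            have := Finset.mem_range.mp hi; omega), Finset.sum_mul]
      _ = ∑ j ∈ Finset.Icc 1 M, ∑ p ∈ Finset.range j, ∑ i ∈ Finset.range (p+1),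
            (γt j i * St j (p+1) / St j j) *
              (‖U (p+1) - U i‖^2 - ‖U p - U i‖^2) := by
          refine Finset.sum_comm' fun p j => ?_
          simp only [Finset.mem_range, Finset.mem_Icc]
          omega
      _ = ∑ j ∈ Finset.Icc 1 M, (St j j)⁻¹ *
            ‖∑ i ∈ Finset.range j, γt j i • (U j - U i)‖^2 := by
          refine Finset.sum_congr rfl fun j hj => ?_
          rw [← keyB' (γt j) U j, Finset.mul_sum]
          refine Finset.sum_congr rfl fun p hp => ?_
          rw [hSt j (p+1), Finset.mul_sum, Finset.mul_sum]
          refine Finset.sum_congr rfl fun i hi => ?_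
          ring
  rw [hcalc]
  refine Finset.sum_nonneg fun j hj => ?_
  have hj' := Finset.mem_Icc.mp hj
  exact mul_nonneg (inv_nonneg.mpr (hpos j hj'.1 hj'.2).le) (sq_nonneg _)



/-- Energy stability of linear multistage minimizing-movement schemes
(Theorem from "variational extrapolation" applied in the paper): if each stage `U_m`
minimizes `u ↦ E(u) + Σ_{i<m} (γ_{m,i}/(2k)) ‖u − U_i‖²`, and the auxiliary
quantities `γ̃, S̃` defined by the downward recursion satisfy `S̃_{m,m} > 0` for all
`m = 1, …, M`, then `E(U_M) ≤ E(U_0)`. -/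
theorem multistage_energy_stability
    {V : Type*} [NormedAddCommGroup V] [InnerProductSpace ℝ V]
    (E : V → ℝ) (k : ℝ) (hk : 0 < k) (M : ℕ) (hM : 1 ≤ M)
    (γ γt St : ℕ → ℕ → ℝ) (U : ℕ → V)
    (hmin : ∀ m, 1 ≤ m → m ≤ M → ∀ u : V,
      E (U m) + ∑ i ∈ Finset.range m, (γ m i / (2 * k)) * ‖U m - U i‖ ^ 2 ≤
        E u + ∑ i ∈ Finset.range m, (γ m i / (2 * k)) * ‖u - U i‖ ^ 2)
    (hγtM : ∀ i < M, γt M i = γ M i)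
    (hγt : ∀ m, 1 ≤ m → m < M → ∀ i < m,
      γt m i = γ m i - ∑ j ∈ Finset.Icc (m + 1) M, γt j i * St j m / St j j)
    (hSt : ∀ j m : ℕ, St j m = ∑ i ∈ Finset.range m, γt j i)
    (hpos : ∀ m, 1 ≤ m → m ≤ M → 0 < St m m) :
    E (U M) ≤ E (U 0) := by
  have h2k : (0:ℝ) < 2 * k := by linarith
  -- the substitution formula expressing γ in terms of γt
  have hsub : ∀ p < M, ∀ i ≤ p,
      γ (p+1) i = ∑ j ∈ Finset.Icc (p+1) M, γt j i * St j (p+1) / St j j := by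
    intro p hp i hi
    have hmem : p + 1 ∈ Finset.Icc (p+1) M := Finset.mem_Icc.mpr ⟨le_refl _, by omega⟩
    have hdiffset : Finset.Icc (p+1) M \ {p+1} = Finset.Icc (p+2) M := by
      ext x
      simp only [Finset.mem_sdiff, Finset.mem_Icc, Finset.mem_singleton]
      omega
    have hsplit : ∑ j ∈ Finset.Icc (p+1) M, γt j i * St j (p+1) / St j j
        = (∑ j ∈ Finset.Icc (p+2) M, γt j i * St j (p+1) / St j j)
          + γt (p+1) i * St (p+1) (p+1) / St (p+1) (p+1) := by
      rw [← hdiffset, Finset.sum_eq_sum_sdiff_singleton_add hmem]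
    have hdv : γt (p+1) i * St (p+1) (p+1) / St (p+1) (p+1) = γt (p+1) i := by
      rw [mul_div_assoc, div_self (ne_of_gt (hpos (p+1) (by omega) (by omega))), mul_one]
    rcases eq_or_lt_of_le (Nat.succ_le_of_lt hp) with hpm | hpm
    · -- p + 1 = M
      have hempty : Finset.Icc (p+2) M = ∅ := Finset.Icc_eq_empty (by omega)
      have hpm' : p + 1 = M := hpm
      rw [hsplit, hempty, Finset.sum_empty, zero_add, hdv, hpm']
      exact (hγtM i (by omega)).symm
    · -- p + 1 < M
      have := hγt (p+1) (by omega) hpm i (by omega)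
      rw [hsplit, hdv, this]
      ring
  -- Step 1: telescoping estimate
  have step1 : E (U M) - E (U 0) ≤ -(1/(2*k)) * ∑ p ∈ Finset.range M,
      ∑ i ∈ Finset.range (p+1), γ (p+1) i * (‖U (p+1) - U i‖^2 - ‖U p - U i‖^2) := by
    rw [Finset.mul_sum, ← Finset.sum_range_sub (fun p => E (U p)) M]
    refine Finset.sum_le_sum fun p hp => ?_
    have hm := hmin (p+1) (by omega) (by have := Finset.mem_range.mp hp; omega) (U p)
    have hexp : -(1/(2*k)) * ∑ i ∈ Finset.range (p+1),
          γ (p+1) i * (‖U (p+1) - U i‖^2 - ‖U p - U i‖^2)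
        = (∑ i ∈ Finset.range (p+1), (γ (p+1) i / (2*k)) * ‖U p - U i‖^2)
          - (∑ i ∈ Finset.range (p+1), (γ (p+1) i / (2*k)) * ‖U (p+1) - U i‖^2) := by
      rw [← Finset.sum_sub_distrib, Finset.mul_sum]
      refine Finset.sum_congr rfl fun i _ => ?_
      field_simp
      ring
    rw [hexp]
    linarith
  have hD := Dnonneg M γ γt St U hsub hSt hpos
  nlinarith [mul_nonneg (by positivity : (0:ℝ) ≤ 1/(2*k)) hD]
end

section
/- Let f(x,t) = arcsinh( e^{−t} cos x ) for (x,t) ∈ ℝ × [0,∞). Then f is smooth and satisfies the graphical curve-shortening equation ∂_t f = (∂_x² f) / (1 + (∂_x f)²) at every point (x,t); i.e., the 'Grim Reaper Wave' is an exact solution of two-dimensional motion by mean curvature for graphs. -/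
open Real Complex

/-! ### Analyticity auxiliary lemmas -/

private lemma analyticAt_ccos (z : ℂ) : AnalyticAt ℂ Complex.cos z := by
  have h : Complex.cos = fun w : ℂ =>
      (Complex.exp (w * Complex.I) + Complex.exp (-w * Complex.I)) / 2 := rfl
  rw [h]
  exact ((analyticAt_cexp.comp ((analyticAt_id).mul analyticAt_const)).add
    (analyticAt_cexp.comp ((analyticAt_id.neg).mul analyticAt_const))).div
    analyticAt_const two_ne_zero

private lemma analyticAt_rcos (x : ℝ) : AnalyticAt ℝ Real.cos x := by
  have h : AnalyticAt ℝ (fun y : ℝ => (Complex.cos (y : ℂ)).re) x :=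
    (Complex.reCLM.analyticAt _).comp
      (((analyticAt_ccos _).restrictScalars).comp (Complex.ofRealCLM.analyticAt x))
  exact h

private lemma sqrt_cpow (y : ℝ) :
    ((1 : ℂ) + (y : ℂ) ^ 2) ^ (1 / 2 : ℂ) = ((Real.sqrt (1 + y ^ 2) : ℝ) : ℂ) := by
  have h1 : ((1 : ℂ) + (y : ℂ) ^ 2) = (((1 + y ^ 2 : ℝ)) : ℂ) := by push_cast; ring
  have h2 : ((1 / 2 : ℂ)) = (((1 / 2 : ℝ)) : ℂ) := by norm_num
  rw [h1, h2, ← Complex.ofReal_cpow (by positivity) (1 / 2 : ℝ),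
    ← Real.sqrt_eq_rpow]

private lemma mem_slit (r : ℝ) (hr : 0 < r) : ((r : ℝ) : ℂ) ∈ Complex.slitPlane :=
  Or.inl (by simpa using hr)

private lemma analyticAt_arsinh (y : ℝ) : AnalyticAt ℝ Real.arsinh y := by
  have hsqrtpos : ∀ z : ℝ, 0 < Real.sqrt (1 + z ^ 2) :=
    fun z => Real.sqrt_pos.2 (by positivity)
  have hgt : ∀ z : ℝ, 0 < z + Real.sqrt (1 + z ^ 2) := by
    intro z
    nlinarith [Real.sq_sqrt (show (0:ℝ) ≤ 1 + z ^ 2 by positivity), hsqrtpos z,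
      sq_nonneg (Real.sqrt (1 + z ^ 2) + z)]
  have hF : AnalyticAt ℂ (fun z : ℂ => Complex.log (z + (1 + z ^ 2) ^ (1/2 : ℂ))) (y : ℂ) := by
    have h1 : AnalyticAt ℂ (fun z : ℂ => (1 + z ^ 2)) (y : ℂ) :=
      analyticAt_const.add (analyticAt_id.pow 2)
    have h2 : AnalyticAt ℂ (fun z : ℂ => (1 + z ^ 2) ^ (1/2 : ℂ)) (y : ℂ) := by
      apply h1.cpow analyticAt_const
      have : (1 : ℂ) + (y : ℂ) ^ 2 = (((1 + y ^ 2 : ℝ)) : ℂ) := by push_cast; ring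
      rw [this]
      exact mem_slit _ (by positivity)
    apply (analyticAt_id.add h2).clog
    simp only [Pi.add_apply, id_eq]
    have : (y : ℂ) + ((1 : ℂ) + (y : ℂ) ^ 2) ^ (1/2 : ℂ)
        = (((y + Real.sqrt (1 + y ^ 2) : ℝ)) : ℂ) := by
      rw [sqrt_cpow y]; push_cast; ring
    rw [this]
    exact mem_slit _ (hgt y)
  have hR : AnalyticAt ℝ
      (fun x : ℝ => (Complex.log ((x : ℂ) + (1 + (x : ℂ) ^ 2) ^ (1/2 : ℂ))).re) y :=
    (Complex.reCLM.analyticAt _).comp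
      ((hF.restrictScalars).comp (Complex.ofRealCLM.analyticAt y))
  apply hR.congr
  apply Filter.Eventually.of_forall
  intro z
  show (Complex.log ((z : ℂ) + (1 + (z : ℂ) ^ 2) ^ (1/2 : ℂ))).re = Real.arsinh z
  rw [show (1 : ℂ) + (z : ℂ) ^ 2 = ((1 : ℂ) + (z : ℂ) ^ 2) from rfl, sqrt_cpow z,
    show (z : ℂ) + ((Real.sqrt (1 + z ^ 2) : ℝ) : ℂ)
      = (((z + Real.sqrt (1 + z ^ 2) : ℝ)) : ℂ) by push_cast; ring,
    ← Complex.ofReal_log (le_of_lt (hgt z))]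
  simp [Real.arsinh]

/-! ### Derivative auxiliary lemmas -/

private lemma hx_deriv (a x : ℝ) :
    HasDerivAt (fun r => Real.arsinh (a * Real.cos r))
      (-(a * Real.sin x) / Real.sqrt (1 + (a * Real.cos x) ^ 2)) x := by
  have h := (Real.hasDerivAt_arsinh (a * Real.cos x)).comp x
    ((Real.hasDerivAt_cos x).const_mul a)
  refine h.congr_deriv ?_
  have hs : Real.sqrt (1 + (a * Real.cos x) ^ 2) > 0 :=
    Real.sqrt_pos.2 (by positivity)
  field_simp

private lemma deriv_x (a : ℝ) :
    (deriv fun r => Real.arsinh (a * Real.cos r)) =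
      fun x => -(a * Real.sin x) / Real.sqrt (1 + (a * Real.cos x) ^ 2) := by
  funext x
  exact (hx_deriv a x).deriv

private lemma g_deriv (a x : ℝ) :
    HasDerivAt (fun s => -(a * Real.sin s) / Real.sqrt (1 + (a * Real.cos s) ^ 2))
      (-(a * Real.cos x) / Real.sqrt (1 + (a * Real.cos x) ^ 2)
        - a ^ 3 * Real.sin x ^ 2 * Real.cos x / Real.sqrt (1 + (a * Real.cos x) ^ 2) ^ 3) x := by
  have hpos : ∀ s : ℝ, (0 : ℝ) < 1 + (a * Real.cos s) ^ 2 := fun s => by positivity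
  have hspos : (0 : ℝ) < Real.sqrt (1 + (a * Real.cos x) ^ 2) :=
    Real.sqrt_pos.2 (hpos x)
  have hh : HasDerivAt (fun s => 1 + (a * Real.cos s) ^ 2)
      (2 * (a * Real.cos x) * (a * -Real.sin x)) x := by
    have := (((Real.hasDerivAt_cos x).const_mul a).pow 2).const_add 1
    refine this.congr_deriv ?_
    ring
  have hsqrt : HasDerivAt (fun s => Real.sqrt (1 + (a * Real.cos s) ^ 2))
      (2 * (a * Real.cos x) * (a * -Real.sin x) / (2 * Real.sqrt (1 + (a * Real.cos x) ^ 2))) x :=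
    hh.sqrt (ne_of_gt (hpos x))
  have hnum : HasDerivAt (fun s => -(a * Real.sin s)) (-(a * Real.cos x)) x := by
    have := ((Real.hasDerivAt_sin x).const_mul a).neg
    exact this
  have h := hnum.div hsqrt (ne_of_gt hspos)
  refine h.congr_deriv ?_
  have hS0 : Real.sqrt (1 + (a * Real.cos x) ^ 2) ≠ 0 := ne_of_gt hspos
  generalize Real.sqrt (1 + (a * Real.cos x) ^ 2) = S at hS0 ⊢
  field_simp

/-- The 'Grim Reaper Wave' `f(x,t) = arcsinh(e^{−t} cos x)` is smooth and is an
exact solution of the graphical curve-shortening equation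
`∂_t f = ∂_x² f / (1 + (∂_x f)²)` at every point of `ℝ × [0,∞)`. -/
theorem grim_reaper_wave_solves_csf :
    ContDiff ℝ (⊤ : ℕ∞) (fun p : ℝ × ℝ => Real.arsinh (Real.exp (-p.2) * Real.cos p.1)) ∧
    ∀ x t : ℝ, 0 ≤ t →
      deriv (fun s => Real.arsinh (Real.exp (-s) * Real.cos x)) t =
        deriv (fun s => deriv (fun r => Real.arsinh (Real.exp (-t) * Real.cos r)) s) x /
          (1 + (deriv (fun r => Real.arsinh (Real.exp (-t) * Real.cos r)) x) ^ 2) := by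
  constructor
  · apply AnalyticOnNhd.contDiff
    intro p _
    exact (analyticAt_arsinh _).comp
      (((analyticAt_rexp.comp (analyticAt_snd.neg)).mul
        ((analyticAt_rcos _).comp analyticAt_fst)))
  · intro x t _
    have hapos : 0 < Real.exp (-t) := Real.exp_pos _
    set a := Real.exp (-t) with ha
    have hppos : (0 : ℝ) < 1 + (a * Real.cos x) ^ 2 := by positivity
    have hspos : 0 < Real.sqrt (1 + (a * Real.cos x) ^ 2) := Real.sqrt_pos.2 hppos
    have hsq : Real.sqrt (1 + (a * Real.cos x) ^ 2) ^ 2 = 1 + (a * Real.cos x) ^ 2 :=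
      Real.sq_sqrt (le_of_lt hppos)
    have ht : HasDerivAt (fun u => Real.arsinh (Real.exp (-u) * Real.cos x))
        (-(a * Real.cos x) / Real.sqrt (1 + (a * Real.cos x) ^ 2)) t := by
      have hinner : HasDerivAt (fun u => Real.exp (-u) * Real.cos x)
          (-Real.exp (-t) * Real.cos x) t := by
        have h0 : HasDerivAt (fun u => Real.exp (-u)) (-Real.exp (-t)) t := by
          have := (Real.hasDerivAt_exp (-t)).comp t ((hasDerivAt_id t).neg)
          refine this.congr_deriv ?_; ring
        simpa using h0.mul_const (Real.cos x)
      have := (Real.hasDerivAt_arsinh (Real.exp (-t) * Real.cos x)).comp t hinner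
      refine this.congr_deriv ?_
      rw [← ha]
      field_simp
    rw [ht.deriv, deriv_x a, (g_deriv a x).deriv]
    beta_reduce
    have hS0 : Real.sqrt (1 + (a * Real.cos x) ^ 2) ≠ 0 := ne_of_gt hspos
    generalize hg : Real.sqrt (1 + (a * Real.cos x) ^ 2) = S at hS0 ⊢
    have hden : 1 + (-(a * Real.sin x) / S) ^ 2 ≠ 0 := by positivity
    rw [eq_div_iff hden]
    field_simp
    ring
end
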